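/- Let 0 < q̄ < L, a ∈ (1, L/q̄), ℓ_c ∈ (0, (L−q̄a)/(L+q̄a)), and B ∈ (q̄a²/(L(1−ℓ_c)), a/(1+ℓ_c)). Suppose z, w ∈ ℝ, K ∈ ℝ, u > 0, j ∈ ℕ, with a^{-(j+1)}u ≤ |z−K| ≤ a^{-j}u, L|z−K| ≤ |w−K| ≤ (1+q̄)|z−K|, and let χ, ζ ∈ [−1,1]. Set α_j := L a^{-(j+2)} u B, ρ := 1+q̄ − L(1−ℓ_c)B/a², let μ ∈ (0, 1−ρ), δ > 0, ℓ ≤ (1−ρ−μ)δ with ℓ ≥ 0, and assume δ ≤ |z−K|. Then |w − K + ℓζ − α_j(1+ℓ_c χ)(w−K)/|w−K|| ≤ (1−μ)|z−K|. -/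

import Mathlib

set_option maxHeartbeats 1000000 in
theorem stmt_6 (qb L a ℓc B : ℝ)
    (hqb : 0 < qb) (hqL : qb < L)
    (ha : a ∈ Set.Ioo 1 (L / qb))
    (hℓc : ℓc ∈ Set.Ioo 0 ((L - qb * a) / (L + qb * a)))
    (hB : B ∈ Set.Ioo (qb * a ^ 2 / (L * (1 - ℓc))) (a / (1 + ℓc)))
    (z w K u : ℝ) (hu : 0 < u) (j : ℕ)
    (hz1 : a ^ (-(j : ℤ) - 1) * u ≤ |z - K|) (hz2 : |z - K| ≤ a ^ (-(j : ℤ)) * u)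
    (hw1 : L * |z - K| ≤ |w - K|) (hw2 : |w - K| ≤ (1 + qb) * |z - K|)
    (χ ζ : ℝ) (hχ : χ ∈ Set.Icc (-1 : ℝ) 1) (hζ : ζ ∈ Set.Icc (-1 : ℝ) 1)
    (αj ρ μ δ ℓ : ℝ)
    (hαj : αj = L * a ^ (-(j : ℤ) - 2) * u * B)
    (hρ : ρ = 1 + qb - L * (1 - ℓc) * B / a ^ 2)
    (hμ : μ ∈ Set.Ioo 0 (1 - ρ))
    (hδ : 0 < δ) (hℓ0 : 0 ≤ ℓ) (hℓ : ℓ ≤ (1 - ρ - μ) * δ)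
    (hδz : δ ≤ |z - K|) :
    |w - K + ℓ * ζ - αj * (1 + ℓc * χ) * ((w - K) / |w - K|)|
      ≤ (1 - μ) * |z - K| := by
  obtain ⟨ha1, ha2⟩ := ha
  have ha0 : (0:ℝ) < a := by linarith
  have hL0 : (0:ℝ) < L := by linarith
  set d := |z - K| with hd
  set v := w - K with hv
  have he0 : (0:ℝ) < a ^ (-(j : ℤ) - 2) := zpow_pos ha0 _
  have h1 : a ^ (-(j : ℤ) - 1) = a ^ (-(j : ℤ) - 2) * a := by
    rw [show (-(j:ℤ) - 1) = (-(j:ℤ) - 2) + 1 by ring, zpow_add_one₀ (ne_of_gt ha0)]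
  have g0 : a ^ (-(j : ℤ) - 1) * a = a ^ (-(j : ℤ)) := by
    rw [← zpow_add_one₀ (ne_of_gt ha0)]; norm_num
  have h2 : a ^ (-(j : ℤ)) = a ^ (-(j : ℤ) - 2) * a ^ 2 := by
    rw [← g0, h1]; ring
  rw [h1] at hz1
  rw [h2] at hz2
  have hd0 : 0 < d := lt_of_lt_of_le (mul_pos (mul_pos he0 ha0) hu) hz1
  have ha2pos : (0:ℝ) < a ^ 2 := by positivity
  have hqa0 : 0 < qb * a := mul_pos hqb ha0
  have hℓc1 : ℓc < 1 := by
    have h := hℓc.2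
    have h' : (L - qb * a) / (L + qb * a) < 1 := by
      rw [div_lt_one (by linarith)]; linarith
    linarith
  have hℓc0 : 0 < ℓc := hℓc.1
  have hB0 : 0 < B :=
    lt_trans (div_pos (by positivity) (mul_pos hL0 (by linarith))) hB.1
  have hBa : B * (1 + ℓc) < a := by
    have h := hB.2
    rw [lt_div_iff₀ (by linarith)] at h
    linarith
  have hαu : a * αj ≤ L * B * d := by
    rw [hαj]
    have := mul_le_mul_of_nonneg_right hz1 (le_of_lt (mul_pos hL0 hB0))
    nlinarith
  have hαl : L * B * d ≤ a ^ 2 * αj := by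
    rw [hαj]
    have := mul_le_mul_of_nonneg_right hz2 (le_of_lt (mul_pos hL0 hB0))
    nlinarith
  have hα0 : 0 < αj := by
    rw [hαj]; exact mul_pos (mul_pos (mul_pos hL0 he0) hu) hB0
  have hv0 : 0 < |v| := lt_of_lt_of_le (mul_pos hL0 hd0) hw1
  set A := αj * (1 + ℓc * χ) with hA
  have hχ1 : 1 - ℓc ≤ 1 + ℓc * χ := by
    have := mul_le_mul_of_nonneg_left hχ.1 (le_of_lt hℓc0)
    linarith
  have hχ2 : 1 + ℓc * χ ≤ 1 + ℓc := by
    have := mul_le_mul_of_nonneg_left hχ.2 (le_of_lt hℓc0)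
    linarith
  have hA1 : αj * (1 - ℓc) ≤ A := mul_le_mul_of_nonneg_left hχ1 (le_of_lt hα0)
  have hA2 : A ≤ αj * (1 + ℓc) := mul_le_mul_of_nonneg_left hχ2 (le_of_lt hα0)
  -- the divided term, with cancellation
  set C := L * (1 - ℓc) * B / a ^ 2 with hC
  have hCc : C * a ^ 2 = L * (1 - ℓc) * B := div_mul_cancel₀ _ (ne_of_gt ha2pos)
  -- upper bound : |v| - A ≤ ρ * d
  have h6 : C * d * a ^ 2 ≤ αj * (1 - ℓc) * a ^ 2 := by
    have := mul_le_mul_of_nonneg_right hαl (show (0:ℝ) ≤ 1 - ℓc by linarith)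
    nlinarith [hCc]
  have h7 : C * d ≤ αj * (1 - ℓc) := le_of_mul_le_mul_right (by linarith [h6]) ha2pos
  have hxu : |v| - A ≤ ρ * d := by
    rw [hρ]
    have hexp : (1 + qb - C) * d = (1 + qb) * d - C * d := by ring
    rw [hexp]
    linarith [hA1, hw2, h7]
  -- lower bound : 0 ≤ |v| - A
  have hx0 : 0 ≤ |v| - A := by
    have h3 : a * (αj * (1 + ℓc)) ≤ L * B * d * (1 + ℓc) := by
      nlinarith [mul_le_mul_of_nonneg_right hαu (show (0:ℝ) ≤ 1 + ℓc by linarith)]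
    have h4 : L * B * d * (1 + ℓc) ≤ L * d * a := by
      nlinarith [mul_le_mul_of_nonneg_left (le_of_lt hBa) (le_of_lt (mul_pos hL0 hd0))]
    have h5 : a * A ≤ a * |v| := by
      have hA2' : a * A ≤ a * (αj * (1 + ℓc)) :=
        mul_le_mul_of_nonneg_left hA2 (le_of_lt ha0)
      have hw1' : a * (L * d) ≤ a * |v| :=
        mul_le_mul_of_nonneg_left hw1 (le_of_lt ha0)
      nlinarith
    linarith [le_of_mul_le_mul_left h5 ha0]
  have hρd0 : 0 ≤ ρ * d := le_trans hx0 hxu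
  have hμ2 : μ < 1 - ρ := hμ.2
  have hc : ρ * d ≤ (1 - μ) * d - ℓ := by
    nlinarith [mul_le_mul_of_nonneg_left hδz (show (0:ℝ) ≤ 1 - ρ - μ by linarith)]
  have habs : |(|v| - A)| ≤ (1 - μ) * d - ℓ :=
    abs_le.2 ⟨by linarith, by linarith⟩
  have key : v - A * (v / |v|) = (|v| - A) * (v / |v|) := by
    field_simp
  have hunit : abs (v / |v|) = 1 := by
    rw [abs_div, abs_abs, div_self (ne_of_gt hv0)]
  calc |v + ℓ * ζ - A * (v / |v|)|
      = |(v - A * (v / |v|)) + ℓ * ζ| := by ring_nf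
    _ ≤ |v - A * (v / |v|)| + |ℓ * ζ| := abs_add_le _ _
    _ = |(|v| - A)| + |ℓ| * |ζ| := by rw [key, abs_mul, hunit, mul_one, abs_mul]
    _ ≤ ((1 - μ) * d - ℓ) + ℓ * 1 := by
        have hζ1 : |ζ| ≤ 1 := abs_le.2 ⟨hζ.1, hζ.2⟩
        have hle : |ℓ| = ℓ := abs_of_nonneg hℓ0
        rw [hle]
        exact add_le_add habs (mul_le_mul_of_nonneg_left hζ1 hℓ0)
    _ = (1 - μ) * d := by ring
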